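/- Fix α ∈ (0,1] and a discount sequence (γ_t)_{t≥1} with Σ_{t=1}^∞ γ_t = 1. Then there exists a probability space and nonnegative random variables (E_t)_{t≥1} with E[E_t] ≤ 1 for every t (so every hypothesis is null, H₀ = ℕ), such that for every ε > 0 there exists t' ∈ ℕ with: for all t ≥ t', the e-LOND discovery sets satisfy FDR(R_t) = E[|R_t ∩ H₀| / max(|R_t|, 1)] > α − ε. (Concretely, one may take the distribution where with probability α·γ_s the event ξ_s occurs on which E_s = 1/(α·γ_s) and E_i = 0 for i ≠ s, and with probability 1 − α all E_i = 0; then FDR(R_t) = α·Σ_{s=1}^t γ_s.) -/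

import Mathlib

open MeasureTheory

/-- The e-LOND discovery sets: `R 0 = ∅`, test level `α_t = α·γ_t·(|R_{t-1}|+1)`,
and `R_t = R_{t-1} ∪ {t}` iff `E_t ≥ 1/α_t` (no rejection when `α_t = 0`). -/
noncomputable def eLOND {Ω : Type*} (α : ℝ) (γ : ℕ → ℝ) (E : ℕ → Ω → ℝ) :
    ℕ → Ω → Finset ℕ
  | 0 => fun _ => ∅
  | t + 1 => fun ω =>
    let R := eLOND α γ E t ω
    let lvl := α * γ (t + 1) * ((R.card : ℝ) + 1)
    if 0 < lvl ∧ 1 / lvl ≤ E (t + 1) ω then insert (t + 1) R else R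

/-! Put mass `α γ_s` on an outcome `ξ_s` on which only `E_s` is nonzero, equal to `1/(α γ_s)`,
and the remaining mass `1 - α` on an outcome on which `E_1, E_2, …` all vanish. Each `E_s` then
has mean at most one, and on `ξ_s` e-LOND makes exactly one discovery, at time `s`, because
`1/(α γ_s)` is precisely its threshold while nothing has been rejected. Hence
`FDR(R_t) = P(ξ_1 ∪ ⋯ ∪ ξ_t) = α Σ_{s ≤ t} γ_s → α`. -/

open Filter Topology Finset

section eLOND

variable {Ω : Type*} {α : ℝ} {γ : ℕ → ℝ} {E : ℕ → Ω → ℝ} {ω : Ω}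

theorem eLOND_succ_of_nonpos {t : ℕ} (hE : E (t + 1) ω ≤ 0) :
    eLOND α γ E (t + 1) ω = eLOND α γ E t ω := by
  refine if_neg fun ⟨hlvl, hle⟩ => ?_
  linarith [one_div_pos.mpr hlvl]

theorem eLOND_eq_of_nonpos {s t : ℕ} (hst : s ≤ t)
    (hE : ∀ u, s < u → u ≤ t → E u ω ≤ 0) : eLOND α γ E t ω = eLOND α γ E s ω := by
  induction t, hst using Nat.le_induction with
  | base => rfl
  | succ t hst ih =>
    rw [eLOND_succ_of_nonpos (hE _ (by omega) le_rfl)]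
    exact ih fun u hsu hut => hE u hsu (by omega)

theorem eLOND_succ_of_eq_empty {t : ℕ} (hR : eLOND α γ E t ω = ∅)
    (hlvl : 0 < α * γ (t + 1)) (hE : (α * γ (t + 1))⁻¹ ≤ E (t + 1) ω) :
    eLOND α γ E (t + 1) ω = {t + 1} := by
  simp only [eLOND, hR, card_empty, Nat.cast_zero, zero_add, mul_one, one_div]
  rw [if_pos ⟨hlvl, hE⟩, insert_empty]

end eLOND

noncomputable def spikeEValue (w : ℕ → ℝ) (t ω : ℕ) : ℝ :=
  if ω = t then (w t)⁻¹ else 0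

theorem spikeEValue_nonneg {w : ℕ → ℝ} (hw : ∀ s, 0 ≤ w s) (t ω : ℕ) :
    0 ≤ spikeEValue w t ω := by
  unfold spikeEValue
  split_ifs
  exacts [inv_nonneg.mpr (hw t), le_rfl]

theorem eLOND_spikeEValue {α : ℝ} (hα : 0 < α) {γ w : ℕ → ℝ}
    (hw : ∀ s, 0 < s → w s = α * γ s) (t ω : ℕ) :
    eLOND α γ (spikeEValue w) t ω = if ω ∈ Ioc 0 t ∧ 0 < γ ω then {ω} else ∅ := by
  split_ifs with h
  · obtain ⟨hω, hγ⟩ := h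
    obtain ⟨hω0, hωt⟩ := mem_Ioc.mp hω
    obtain ⟨s, rfl⟩ := Nat.exists_eq_add_one.mpr hω0
    have hR : eLOND α γ (spikeEValue w) s (s + 1) = ∅ :=
      eLOND_eq_of_nonpos (Nat.zero_le s) fun u _ hus => by
        simp [spikeEValue, show s + 1 ≠ u by omega]
    rw [eLOND_eq_of_nonpos hωt fun u hsu _ => by simp [spikeEValue, show s + 1 ≠ u by omega]]
    refine eLOND_succ_of_eq_empty hR (mul_pos hα hγ) ?_
    simp [spikeEValue, hw (s + 1) s.succ_pos]
  · refine eLOND_eq_of_nonpos (Nat.zero_le t) fun u hu hut => ?_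
    unfold spikeEValue
    split_ifs with hωu
    · subst hωu
      have hγ : γ ω ≤ 0 := not_lt.mp fun hγ => h ⟨mem_Ioc.mpr ⟨hu, hut⟩, hγ⟩
      rw [hw ω hu, inv_nonpos]
      exact mul_nonpos_of_nonneg_of_nonpos hα.le hγ
    · exact le_rfl

noncomputable def PMF.ofReal {ι : Type*} (w : ι → ℝ) (hw0 : ∀ a, 0 ≤ w a)
    (hw : HasSum w 1) : PMF ι :=
  ⟨fun a => ENNReal.ofReal (w a), ENNReal.summable.hasSum_iff.mpr <| by
    rw [← ENNReal.ofReal_tsum_of_nonneg hw0 hw.summable, hw.tsum_eq, ENNReal.ofReal_one]⟩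

theorem PMF.ofReal_apply {ι : Type*} (w : ι → ℝ) (hw0 : ∀ a, 0 ≤ w a) (hw : HasSum w 1)
    (a : ι) : PMF.ofReal w hw0 hw a = ENNReal.ofReal (w a) := rfl

theorem lintegral_spikeEValue_le_one {w : ℕ → ℝ} (hw0 : ∀ s, 0 ≤ w s) (hw : HasSum w 1)
    (t : ℕ) :
    ∫⁻ ω, ENNReal.ofReal (spikeEValue w t ω) ∂(PMF.ofReal w hw0 hw).toMeasure ≤ 1 := by
  rw [lintegral_countable', tsum_eq_single t fun ω hω => by simp [spikeEValue, hω],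
    PMF.toMeasure_apply_singleton _ _ (measurableSet_singleton t), PMF.ofReal_apply,
    spikeEValue, if_pos rfl, ← ENNReal.ofReal_mul (inv_nonneg.mpr (hw0 t)),
    ← ENNReal.ofReal_one]
  exact ENNReal.ofReal_le_ofReal inv_mul_le_one

/-- Outcome `s ≥ 1` is the event `ξ_s` of probability `α γ_s`; outcome `0` carries the rest. -/
noncomputable def sharpWeight (α : ℝ) (γ : ℕ → ℝ) (s : ℕ) : ℝ :=
  if s = 0 then 1 - α else α * γ s

theorem sharpWeight_nonneg {α : ℝ} (hα0 : 0 ≤ α) (hα1 : α ≤ 1) {γ : ℕ → ℝ}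
    (hγ : ∀ s, 0 ≤ γ s) (s : ℕ) : 0 ≤ sharpWeight α γ s := by
  unfold sharpWeight
  split_ifs
  exacts [sub_nonneg.mpr hα1, mul_nonneg hα0 (hγ s)]

theorem sharpWeight_of_pos (α : ℝ) (γ : ℕ → ℝ) {s : ℕ} (hs : 0 < s) :
    sharpWeight α γ s = α * γ s := if_neg hs.ne'

theorem hasSum_sharpWeight (α : ℝ) {γ : ℕ → ℝ} (hγ : HasSum (fun s => γ (s + 1)) 1) :
    HasSum (sharpWeight α γ) 1 := by
  rw [← hasSum_nat_add_iff' 1]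
  simpa [sharpWeight_of_pos, sharpWeight] using hγ.mul_left α

theorem sum_Ioc_zero_eq_sum_range {M : Type*} [AddCommMonoid M] (f : ℕ → M) (t : ℕ) :
    ∑ s ∈ Ioc 0 t, f s = ∑ s ∈ range t, f (s + 1) := by
  induction t with
  | zero => rfl
  | succ t ih => rw [sum_Ioc_succ_top t.zero_le, ih, sum_range_succ]

/-- The false discovery proportion of `R` when every hypothesis is null. -/
noncomputable def falseDiscoveryProportion (R : Finset ℕ) : ℝ := R.card / max (R.card : ℝ) 1

theorem integral_falseDiscoveryProportion_eLOND_spikeEValue {α : ℝ} (hα0 : 0 < α)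
    (hα1 : α ≤ 1) {γ : ℕ → ℝ} (hγ0 : ∀ s, 0 ≤ γ s) (hγ : HasSum (fun s => γ (s + 1)) 1)
    (t : ℕ) :
    ∫ ω, falseDiscoveryProportion (eLOND α γ (spikeEValue (sharpWeight α γ)) t ω)
      ∂(PMF.ofReal _ (sharpWeight_nonneg hα0.le hα1 hγ0) (hasSum_sharpWeight α hγ)).toMeasure
      = α * ∑ s ∈ range t, γ (s + 1) := by
  classical
  set S := (Ioc 0 t).filter (fun s => 0 < γ s)
  have hfdp : (fun ω => falseDiscoveryProportion
      (eLOND α γ (spikeEValue (sharpWeight α γ)) t ω)) = (S : Set ℕ).indicator 1 := by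
    ext ω
    rw [eLOND_spikeEValue hα0 (fun _ => sharpWeight_of_pos α γ)]
    by_cases h : ω ∈ Ioc 0 t ∧ 0 < γ ω
    · rw [if_pos h, Set.indicator_of_mem (by simpa [S] using h)]
      simp [falseDiscoveryProportion]
    · rw [if_neg h, Set.indicator_of_notMem (by simpa [S] using h)]
      simp [falseDiscoveryProportion]
  rw [hfdp, integral_indicator_one (S.measurableSet), measureReal_def,
    PMF.toMeasure_apply_finset]
  simp only [PMF.ofReal_apply]
  rw [ENNReal.toReal_sum (fun s _ => ENNReal.ofReal_ne_top)]
  simp only [ENNReal.toReal_ofReal (sharpWeight_nonneg hα0.le hα1 hγ0 _)]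
  rw [← sum_Ioc_zero_eq_sum_range, mul_sum, sum_filter_of_ne]
  · exact sum_congr rfl fun s hs => sharpWeight_of_pos α γ (mem_Ioc.mp hs).1
  · intro s hs hne
    rw [sharpWeight_of_pos α γ (mem_Ioc.mp hs).1] at hne
    exact (hγ0 s).lt_of_ne' (right_ne_zero_of_mul hne)

/-- **The FDR control of e-LOND is sharp.** Fix `α ∈ (0,1]` and a discount sequence
`(γ_t)_{t≥1}` with `Σ_{t≥1} γ_t = 1`. Then there exist a probability space and
nonnegative random variables `(E_t)_{t≥1}` with `𝔼[E_t] ≤ 1` for every `t` (so every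
hypothesis is null, `H₀ = ℕ`) such that for every `ε > 0` there is a `t'` with:
for all `t ≥ t'`, the e-LOND discovery sets satisfy
`FDR(R_t) = 𝔼[|R_t| / max(|R_t|,1)] > α − ε`. -/
theorem eLOND_fdr_sharp
    (α : ℝ) (hα0 : 0 < α) (hα1 : α ≤ 1)
    (γ : ℕ → ℝ) (hγ0 : ∀ t, 0 ≤ γ t) (hγ1 : ∑' t : ℕ, γ (t + 1) = 1) :
    ∃ (Ω : Type) (_ : MeasurableSpace Ω) (μ : Measure Ω) (_ : IsProbabilityMeasure μ)
      (E : ℕ → Ω → ℝ),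
      (∀ t, Measurable (E t)) ∧ (∀ t ω, 0 ≤ E t ω) ∧
      (∀ t, ∫⁻ ω, ENNReal.ofReal (E t ω) ∂μ ≤ 1) ∧
      ∀ ε : ℝ, 0 < ε → ∃ t' : ℕ, ∀ t, t' ≤ t →
        α - ε < ∫ ω, ((eLOND α γ E t ω).card : ℝ) /
          max ((eLOND α γ E t ω).card : ℝ) 1 ∂μ := by
  have hγ : HasSum (fun t => γ (t + 1)) 1 := by
    by_cases hs : Summable fun t => γ (t + 1)
    · exact hγ1 ▸ hs.hasSum
    · simp [tsum_eq_zero_of_not_summable hs] at hγ1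
  have hw0 := sharpWeight_nonneg hα0.le hα1 hγ0
  have hw := hasSum_sharpWeight α hγ
  refine ⟨ℕ, inferInstance, (PMF.ofReal _ hw0 hw).toMeasure, inferInstance,
    spikeEValue (sharpWeight α γ), fun t => measurable_of_countable _, spikeEValue_nonneg hw0,
    lintegral_spikeEValue_le_one hw0 hw, fun ε hε => ?_⟩
  have hlim := (hγ.tendsto_sum_nat.const_mul α).eventually
    (eventually_gt_nhds (show α - ε < α * 1 by linarith))
  obtain ⟨t', ht'⟩ := eventually_atTop.mp hlim
  refine ⟨t', fun t ht => ?_⟩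
  calc α - ε < α * ∑ s ∈ range t, γ (s + 1) := ht' t ht
    _ = _ := (integral_falseDiscoveryProportion_eLOND_spikeEValue hα0 hα1 hγ0 hγ t).symm
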